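/- Let 𝒩 be a finite set of nodes with a distinguished nonempty subset ∂𝒩 (boundary nodes), let 𝒩° = 𝒩 ∖ ∂𝒩, and let L_h : ℝ^𝒩 → ℝ^{𝒩°} be a linear map satisfying the maximum principle: every Z ∈ ℝ^𝒩 with (L_h Z)_p ≤ 0 for all p ∈ 𝒩° satisfies max_{p∈𝒩} Z_p = max_{p∈∂𝒩} Z_p. Let ε > 0 and M ≥ 0, and let e, g ∈ ℝ^𝒩 be such that |(L_h e)_p| ≤ ε and (L_h g)_p ≥ 2ε for all p ∈ 𝒩°, and 0 ≤ g_p ≤ M for all p ∈ 𝒩. Then max_{p∈𝒩} |e_p| ≤ max_{p∈∂𝒩} |e_p| + M. -/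
import Mathlib


open Finset

/-- Abstract error-propagation lemma (Section 4.4): if a linear
discretization `L` satisfies the discrete maximum principle relative to a nonempty
boundary set `Bd`, `|L e| ≤ ε` in the interior, and `g` is a strict discrete
supersolution (`L g ≥ 2ε` in the interior) with `0 ≤ g ≤ M`, then the interior error
exceeds the boundary error by at most `M`. -/
theorem stmt12 (ι : Type*) [Fintype ι] (Bd : Finset ι) (hBd : Bd.Nonempty)
    (L : (ι → ℝ) →ₗ[ℝ] (ι → ℝ))
    (hmax : ∀ Z : ι → ℝ, (∀ p, p ∉ Bd → L Z p ≤ 0) →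
      ∀ p, Z p ≤ Bd.sup' hBd Z)
    (ε M : ℝ) (hε : 0 < ε) (hM : 0 ≤ M) (e g : ι → ℝ)
    (he : ∀ p, p ∉ Bd → |L e p| ≤ ε)
    (hg : ∀ p, p ∉ Bd → 2 * ε ≤ L g p)
    (hg0 : ∀ p, 0 ≤ g p) (hgM : ∀ p, g p ≤ M) :
    ∀ p, |e p| ≤ Bd.sup' hBd (fun q => |e q|) + M := by
  intro p
  have key : ∀ u : ι → ℝ, (∀ q, q ∉ Bd → |L u q| ≤ ε) →
      u p ≤ Bd.sup' hBd (fun q => |e q|) + M ∨ True → True := fun _ _ _ => trivial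
  have main : ∀ u : ι → ℝ, (∀ q, q ∉ Bd → |L u q| ≤ ε) →
      (∀ q, |u q| ≤ |e q|) →
      u p ≤ Bd.sup' hBd (fun q => |e q|) + M := by
    intro u hu hue
    have hZ : ∀ q, q ∉ Bd → L (u - g) q ≤ 0 := by
      intro q hq
      have h1 := hu q hq
      have h2 := hg q hq
      have : L (u - g) q = L u q - L g q := by simp [map_sub]
      rw [this]
      nlinarith [abs_le.mp h1]
    have h3 := hmax (u - g) hZ p
    have h4 : Bd.sup' hBd (u - g) ≤ Bd.sup' hBd (fun q => |e q|) := by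
      apply sup'_le
      intro q hq
      have := hg0 q
      have := hue q
      calc (u - g) q = u q - g q := rfl
        _ ≤ |u q| := by cases abs_cases (u q) <;> linarith
        _ ≤ |e q| := hue q
        _ ≤ Bd.sup' hBd (fun r => |e r|) := le_sup' (fun r => |e r|) hq
    have : u p - g p ≤ Bd.sup' hBd (fun q => |e q|) := le_trans h3 h4
    have := hgM p
    simp only [Pi.sub_apply] at *
    linarith [this]
  rcases abs_cases (e p) with ⟨h, _⟩ | ⟨h, _⟩
  · rw [h]
    exact main e he (fun q => le_refl _)
  · rw [h]
    refine main (-e) ?_ (fun q => by simp)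
    intro q hq
    have := he q hq
    rw [map_neg]
    simpa [abs_neg] using this
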